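/- arXiv:1806.07211 — 2 statements merged into one kernel-verified Lean document; each statement's English description precedes it below -/
import Mathlib

section
/- If a simplicial complex Γ is d-collapsible, then its d-closure Δ_d(Γ) is d-collapsible. -/
namespace ChordalPaper

/-- A simplicial complex on vertex set `Fin n`: a family of finsets closed under subsets. -/
def IsComplex {n : ℕ} (Γ : Set (Finset (Fin n))) : Prop :=
  ∀ F ∈ Γ, ∀ F' ⊆ F, F' ∈ Γ

/-- The `d`-closure `Δ_d(Γ)`: all subsets of size `≤ d`, together with all subsets
all of whose `(d+1)`-element subsets are faces of `Γ`. -/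
def dClosure {n : ℕ} (d : ℕ) (Γ : Set (Finset (Fin n))) : Set (Finset (Fin n)) :=
  {F | F.card ≤ d ∨ ∀ G ⊆ F, G.card = d + 1 → G ∈ Γ}

/-- The pure `(d-1)`-skeleton `⟨[n]⟩^{[d-1]}` of the full simplex: all subsets of size `≤ d`. -/
def fullSkel (n d : ℕ) : Set (Finset (Fin n)) := {F | F.card ≤ d}

/-- A facet: a maximal face. -/
def IsFacet {n : ℕ} (Γ : Set (Finset (Fin n))) (F : Finset (Fin n)) : Prop :=
  F ∈ Γ ∧ ∀ G ∈ Γ, F ⊆ G → G = F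

/-- A free face: a face contained in a unique facet. -/
def IsFreeFace {n : ℕ} (Γ : Set (Finset (Fin n))) (E : Finset (Fin n)) : Prop :=
  E ∈ Γ ∧ ∃! F, IsFacet Γ F ∧ E ⊆ F

/-- Collapse at `E`: remove all faces containing `E` (including `E` itself). -/
def collapseFace {n : ℕ} (Γ : Set (Finset (Fin n))) (E : Finset (Fin n)) :
    Set (Finset (Fin n)) := {F ∈ Γ | ¬ E ⊆ F}

/-- Successive collapses along a list of faces. -/
def collapseList {n : ℕ} (Γ : Set (Finset (Fin n))) :
    List (Finset (Fin n)) → Set (Finset (Fin n))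
  | [] => Γ
  | E :: L => collapseList (collapseFace Γ E) L

/-- A free sequence: each face is free in the complex obtained by collapsing the previous ones. -/
def IsFreeSeq {n : ℕ} (Γ : Set (Finset (Fin n))) : List (Finset (Fin n)) → Prop
  | [] => True
  | E :: L => IsFreeFace Γ E ∧ IsFreeSeq (collapseFace Γ E) L

/-- `d`-collapsibility: a sequence of elementary `d`-collapsings (at free faces of
dimension `< d`, i.e. cardinality `≤ d`) reduces `Γ` to the void complex. -/
def Collapsible {n : ℕ} (d : ℕ) (Γ : Set (Finset (Fin n))) : Prop :=
  ∃ L : List (Finset (Fin n)),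
    IsFreeSeq Γ L ∧ (∀ E ∈ L, E.card ≤ d) ∧ collapseList Γ L = ∅

/-- Simplicial deletion `Γ∖E`: remove all faces strictly containing `E` (keeping `E`). -/
def srDel {n : ℕ} (Γ : Set (Finset (Fin n))) (E : Finset (Fin n)) :
    Set (Finset (Fin n)) := {F ∈ Γ | ¬ E ⊂ F}

/-- Successive simplicial deletions along a list of faces. -/
def srDelList {n : ℕ} (Γ : Set (Finset (Fin n))) :
    List (Finset (Fin n)) → Set (Finset (Fin n))
  | [] => Γ
  | E :: L => srDelList (srDel Γ E) L

/-- A simplicial order for a `d`-closure on `Fin n`: a sequence of non-facet free faces of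
cardinality `d` whose successive simplicial deletions reduce the complex to the pure
`(d-1)`-skeleton of the full simplex. -/
def IsSimpOrder {n : ℕ} (d : ℕ) (Γ : Set (Finset (Fin n))) :
    List (Finset (Fin n)) → Prop
  | [] => Γ = fullSkel n d
  | E :: L => E.card = d ∧ IsFreeFace Γ E ∧ ¬ IsFacet Γ E ∧ IsSimpOrder d (srDel Γ E) L

/-- `Γ` is `d`-chordal: its `d`-closure equals the pure `(d-1)`-skeleton of the full
simplex or admits a simplicial order. -/
def DChordal {n : ℕ} (d : ℕ) (Γ : Set (Finset (Fin n))) : Prop :=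
  ∃ L, IsSimpOrder d (dClosure d Γ) L

/-- A minimal nonface of `Γ`. -/
def IsMinNonface {n : ℕ} (Γ : Set (Finset (Fin n))) (F : Finset (Fin n)) : Prop :=
  F ∉ Γ ∧ ∀ G ⊂ F, G ∈ Γ

end ChordalPaper

/-!
Let `Γ` collapse along `E₁, E₂, …`, and write `τ` for the unique facet of `Γ` containing `E₁`.
Inside the `d`-closure, a face of size `> d` containing `E₁` is covered by `(d+1)`-faces of `Γ`
containing `E₁`, hence lies in `τ`. So the `d`-sets `S` with `E₁ ⊆ S ⊆ τ` can be collapsed one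
by one (splitting on a vertex `v ∈ τ \ E₁`: first those containing `v`, then those in
`τ \ {v}`), each with unique facet a subset of `τ`. What remains is the `d`-closure of
`Γ` collapsed at `E₁`, minus the up-sets of `d`-sets that are nonfaces of it; induction
along the collapse sequence ends at `Γ = ∅`, where only sets of size `≤ d` are left, and
those collapse in order of decreasing size.
-/

namespace ChordalPaper

variable {n d : ℕ}

def CollapsesTo (d : ℕ) (C C' : Set (Finset (Fin n))) : Prop :=
  ∃ L : List (Finset (Fin n)), IsFreeSeq C L ∧ (∀ E ∈ L, E.card ≤ d) ∧ collapseList C L = C'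

theorem collapsible_iff_collapsesTo_empty {C : Set (Finset (Fin n))} :
    Collapsible d C ↔ CollapsesTo d C ∅ :=
  Iff.rfl

theorem collapseList_append (C : Set (Finset (Fin n))) (K M : List (Finset (Fin n))) :
    collapseList C (K ++ M) = collapseList (collapseList C K) M := by
  induction K generalizing C with
  | nil => rfl
  | cons E K ih => exact ih (collapseFace C E)

theorem IsFreeSeq.append {C : Set (Finset (Fin n))} {K M : List (Finset (Fin n))}
    (hK : IsFreeSeq C K) (hM : IsFreeSeq (collapseList C K) M) : IsFreeSeq C (K ++ M) := by
  induction K generalizing C with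
  | nil => exact hM
  | cons E K ih => exact ⟨hK.1, ih hK.2 hM⟩

namespace CollapsesTo

theorem refl (C : Set (Finset (Fin n))) : CollapsesTo d C C :=
  ⟨[], trivial, by simp, rfl⟩

theorem of_eq {C C' : Set (Finset (Fin n))} (h : C = C') : CollapsesTo d C C' :=
  h ▸ refl C

theorem trans {C₁ C₂ C₃ : Set (Finset (Fin n))} (h₁₂ : CollapsesTo d C₁ C₂)
    (h₂₃ : CollapsesTo d C₂ C₃) : CollapsesTo d C₁ C₃ := by
  obtain ⟨K, hK, hKd, rfl⟩ := h₁₂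
  obtain ⟨M, hM, hMd, rfl⟩ := h₂₃
  refine ⟨K ++ M, hK.append hM, ?_, collapseList_append C₁ K M⟩
  simp only [List.mem_append]
  rintro E (hE | hE)
  exacts [hKd E hE, hMd E hE]

theorem collapseFace {C : Set (Finset (Fin n))} {E : Finset (Fin n)} (hE : IsFreeFace C E)
    (hEd : E.card ≤ d) : CollapsesTo d C (collapseFace C E) :=
  ⟨[E], ⟨hE, trivial⟩, by simpa using hEd, rfl⟩

end CollapsesTo

theorem IsFacet.isFreeFace {C : Set (Finset (Fin n))} {F : Finset (Fin n)} (hF : IsFacet C F) :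
    IsFreeFace C F :=
  ⟨hF.1, F, ⟨hF, subset_rfl⟩, fun W hW => hF.2 W hW.1.1 hW.2⟩

theorem IsFacet.collapseFace_eq {C : Set (Finset (Fin n))} {F : Finset (Fin n)}
    (hF : IsFacet C F) : collapseFace C F = C \ {F} := by
  ext G
  refine ⟨fun hG => ⟨hG.1, fun hGF => hG.2 (Set.mem_singleton_iff.mp hGF).ge⟩,
    fun hG => ⟨hG.1, fun hFG => hG.2 (hF.2 G hG.1 hFG)⟩⟩

theorem exists_isFacet_superset {C : Set (Finset (Fin n))} {F : Finset (Fin n)} (hF : F ∈ C) :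
    ∃ τ, IsFacet C τ ∧ F ⊆ τ := by
  obtain ⟨τ, ⟨hτ, hFτ⟩, hmax⟩ := Set.exists_max_image {G ∈ C | F ⊆ G} Finset.card
    (Set.toFinite _) ⟨F, hF, subset_rfl⟩
  exact ⟨τ, ⟨hτ, fun G hG hτG =>
    (Finset.eq_of_subset_of_card_le hτG (hmax G ⟨hG, hFτ.trans hτG⟩)).symm⟩, hFτ⟩

theorem subset_of_isFacet_unique {C : Set (Finset (Fin n))} {E τ G : Finset (Fin n)}
    (huniq : ∀ W, IsFacet C W ∧ E ⊆ W → W = τ) (hG : G ∈ C) (hEG : E ⊆ G) : G ⊆ τ := by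
  obtain ⟨W, hW, hGW⟩ := exists_isFacet_superset hG
  exact huniq W ⟨hW, hEG.trans hGW⟩ ▸ hGW

theorem collapsible_of_forall_card_le {C : Set (Finset (Fin n))}
    (hC : ∀ F ∈ C, F.card ≤ d) : Collapsible d C := by
  induction hk : C.ncard generalizing C with
  | zero =>
    rw [Set.ncard_eq_zero] at hk
    exact CollapsesTo.of_eq hk
  | succ k ih =>
    obtain ⟨F, hF, hmax⟩ := Set.exists_max_image C Finset.card (Set.toFinite C)
      (Set.nonempty_of_ncard_ne_zero (by omega))
    have hFacet : IsFacet C F :=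
      ⟨hF, fun G hG hFG => (Finset.eq_of_subset_of_card_le hFG (hmax G hG)).symm⟩
    refine (CollapsesTo.collapseFace hFacet.isFreeFace (hC F hF)).trans ?_
    rw [hFacet.collapseFace_eq]
    exact ih (fun G hG => hC G hG.1) (by rw [Set.ncard_sdiff_singleton_of_mem hF, hk]; rfl)

def avoiding (C R : Set (Finset (Fin n))) : Set (Finset (Fin n)) :=
  {F ∈ C | ∀ S ∈ R, ¬ S ⊆ F}

theorem avoiding_empty (C : Set (Finset (Fin n))) : avoiding C ∅ = C := by
  simp [avoiding]

theorem avoiding_avoiding (C R R' : Set (Finset (Fin n))) :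
    avoiding (avoiding C R) R' = avoiding C (R ∪ R') := by
  ext F
  simp only [avoiding, Set.mem_ofPred_eq, Set.mem_union]
  grind

theorem avoiding_singleton (C : Set (Finset (Fin n))) (E : Finset (Fin n)) :
    avoiding C {E} = collapseFace C E := by
  simp [avoiding, collapseFace]

def dSetsBetween (d : ℕ) (E τ : Finset (Fin n)) : Set (Finset (Fin n)) :=
  {S | S.card = d ∧ E ⊆ S ∧ S ⊆ τ}

theorem dSetsBetween_of_card_eq {E τ : Finset (Fin n)} (hEd : E.card = d) (hEτ : E ⊆ τ) :
    dSetsBetween d E τ = {E} := by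
  ext S
  simp only [dSetsBetween, Set.mem_ofPred_eq, Set.mem_singleton_iff]
  refine ⟨fun ⟨hS, hES, _⟩ => (Finset.eq_of_subset_of_card_le hES (by omega)).symm, ?_⟩
  rintro rfl
  exact ⟨hEd, subset_rfl, hEτ⟩

theorem dSetsBetween_self {E : Finset (Fin n)} (hEd : E.card < d) : dSetsBetween d E E = ∅ := by
  ext S
  simp only [dSetsBetween, Set.mem_ofPred_eq, Set.mem_empty_iff_false, iff_false]
  rintro ⟨hS, hES, hSE⟩
  rw [Finset.Subset.antisymm hSE hES] at hS
  omega

theorem dSetsBetween_split {E τ : Finset (Fin n)} {v : Fin n} (hv : v ∈ τ) :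
    dSetsBetween d E τ = dSetsBetween d (insert v E) τ ∪ dSetsBetween d E (τ.erase v) := by
  ext S
  simp only [dSetsBetween, Set.mem_ofPred_eq, Set.mem_union, Finset.insert_subset_iff,
    Finset.subset_erase]
  by_cases hvS : v ∈ S
  · have : S ⊆ τ → v ∈ τ := fun _ => hv
    tauto
  · tauto

theorem isFreeFace_of_forall_subset {C : Set (Finset (Fin n))} {E τ : Finset (Fin n)}
    (hE : E ∈ C) (hτ : τ ∈ C) (hEτ : E ⊆ τ) (hup : ∀ F ∈ C, E ⊆ F → F ⊆ τ) :
    IsFreeFace C E := by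
  have hτFacet : IsFacet C τ :=
    ⟨hτ, fun G hG hτG => Finset.Subset.antisymm (hup G hG (hEτ.trans hτG)) hτG⟩
  exact ⟨hE, τ, ⟨hτFacet, hEτ⟩, fun W hW => (hW.1.2 τ hτ (hup W hW.1.1 hW.2)).symm⟩

variable {C : Set (Finset (Fin n))} {E τ : Finset (Fin n)}

theorem collapsesTo_avoiding_dSetsBetween_of_card_eq (hEτ : E ⊆ τ) (hEd : E.card = d)
    (hup : ∀ F ∈ C, E ⊆ F → d < F.card → F ⊆ τ) (hint : ∀ F, E ⊆ F → F ⊆ τ → F ∈ C) :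
    CollapsesTo d C (avoiding C (dSetsBetween d E τ)) := by
  rw [dSetsBetween_of_card_eq hEd hEτ, avoiding_singleton]
  refine CollapsesTo.collapseFace (isFreeFace_of_forall_subset (hint E subset_rfl hEτ)
    (hint τ hEτ subset_rfl) hEτ fun F hF hEF => ?_) hEd.le
  by_cases hFd : d < F.card
  · exact hup F hF hEF hFd
  · exact (Finset.eq_of_subset_of_card_le hEF (by omega)) ▸ hEτ

theorem collapsesTo_avoiding_dSetsBetween (hEτ : E ⊆ τ) (hEd : E.card ≤ d)
    (hup : ∀ F ∈ C, E ⊆ F → d < F.card → F ⊆ τ) (hint : ∀ F, E ⊆ F → F ⊆ τ → F ∈ C) :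
    CollapsesTo d C (avoiding C (dSetsBetween d E τ)) := by
  induction hm : (τ \ E).card generalizing C E τ with
  | zero =>
    rcases hEd.eq_or_lt with hEd | hEd
    · exact collapsesTo_avoiding_dSetsBetween_of_card_eq hEτ hEd hup hint
    have hτE : τ = E := Finset.Subset.antisymm
      (Finset.sdiff_eq_empty_iff_subset.mp (Finset.card_eq_zero.mp hm)) hEτ
    rw [hτE, dSetsBetween_self hEd, avoiding_empty]
    exact CollapsesTo.refl C
  | succ m ih =>
    rcases hEd.eq_or_lt with hEd | hEd
    · exact collapsesTo_avoiding_dSetsBetween_of_card_eq hEτ hEd hup hint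
    obtain ⟨v, hv⟩ : (τ \ E).Nonempty := Finset.card_pos.mp (by omega)
    obtain ⟨hvτ, hvE⟩ := Finset.mem_sdiff.mp hv
    have hcard : ((τ \ E).erase v).card = m := by rw [Finset.card_erase_of_mem hv, hm]; rfl
    -- first the `d`-sets of `[E, τ]` containing `v` ...
    have h₁ := ih (C := C) (E := insert v E) (τ := τ) (Finset.insert_subset hvτ hEτ)
      (by rw [Finset.card_insert_of_notMem hvE]; omega)
      (fun F hF hEF => hup F hF ((Finset.subset_insert v E).trans hEF))
      (fun F hEF => hint F ((Finset.subset_insert v E).trans hEF))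
      (by rw [Finset.sdiff_insert, hcard])
    -- ... after which no face of size `> d` containing `E` contains `v`
    refine h₁.trans ?_
    rw [dSetsBetween_split (E := E) hvτ, ← avoiding_avoiding]
    refine ih (Finset.subset_erase.mpr ⟨hEτ, hvE⟩) hEd.le (fun F hF hEF hFd => ?_)
      (fun F hEF hFτ => ?_) (by rw [Finset.erase_sdiff_comm, hcard])
    · have hFτ := hup F hF.1 hEF hFd
      refine Finset.subset_erase.mpr ⟨hFτ, fun hvF => ?_⟩
      obtain ⟨S, hvES, hSF, hS⟩ := Finset.exists_subsuperset_card_eq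
        (Finset.insert_subset hvF hEF) (by rw [Finset.card_insert_of_notMem hvE]; omega) hFd.le
      exact hF.2 S ⟨hS, hvES, hSF.trans hFτ⟩ hSF
    · obtain ⟨hFτ, hvF⟩ := Finset.subset_erase.mp hFτ
      exact ⟨hint F hEF hFτ, fun S hS hSF => hvF (hSF (hS.2.1 (Finset.mem_insert_self v E)))⟩

variable {Γ : Set (Finset (Fin n))}

theorem dClosure_mono {Γ' : Set (Finset (Fin n))} (h : Γ ⊆ Γ') : dClosure d Γ ⊆ dClosure d Γ' :=
  fun _ hF => hF.imp_right fun hF G hGF hG => h (hF G hGF hG)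

theorem IsComplex.collapseFace (hΓ : IsComplex Γ) (E : Finset (Fin n)) :
    IsComplex (collapseFace Γ E) :=
  fun _ hF F' hF' => ⟨hΓ _ hF.1 F' hF', fun hE => hF.2 (hE.trans hF')⟩

theorem IsComplex.mem_dClosure_of_subset {F : Finset (Fin n)} (hΓ : IsComplex Γ) (hτ : τ ∈ Γ)
    (hFτ : F ⊆ τ) : F ∈ dClosure d Γ :=
  Or.inr fun G hGF _ => hΓ τ hτ G (hGF.trans hFτ)

theorem card_le_of_mem_dClosure_empty {F : Finset (Fin n)}
    (hF : F ∈ dClosure d (∅ : Set (Finset (Fin n)))) : F.card ≤ d := by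
  refine hF.elim id fun hF' => ?_
  by_contra! hFd
  obtain ⟨G, hGF, hG⟩ := Finset.exists_subset_card_eq (show d + 1 ≤ F.card by omega)
  exact hF' G hGF hG

theorem subset_of_mem_dClosure {F : Finset (Fin n)} (huniq : ∀ W, IsFacet Γ W ∧ E ⊆ W → W = τ)
    (hEd : E.card ≤ d) (hF : F ∈ dClosure d Γ) (hEF : E ⊆ F) (hFd : d < F.card) : F ⊆ τ := by
  intro x hx
  obtain ⟨G, hxEG, hGF, hG⟩ := Finset.exists_subsuperset_card_eq (Finset.insert_subset hx hEF)
    ((Finset.card_insert_le x E).trans (by omega)) hFd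
  have hGΓ : G ∈ Γ := hF.resolve_left (by omega) G hGF hG
  exact subset_of_isFacet_unique huniq hGΓ ((Finset.subset_insert x E).trans hxEG)
    (hxEG (Finset.mem_insert_self x E))

theorem avoiding_dClosure_collapseFace (huniq : ∀ W, IsFacet Γ W ∧ E ⊆ W → W = τ)
    (hEd : E.card ≤ d) (R : Set (Finset (Fin n))) :
    avoiding (dClosure d Γ) (R ∪ dSetsBetween d E τ) =
      avoiding (dClosure d (collapseFace Γ E)) (R ∪ dSetsBetween d E τ) := by
  ext F
  refine ⟨fun ⟨hF, hFR⟩ => ⟨?_, hFR⟩, fun ⟨hF, hFR⟩ => ⟨dClosure_mono (fun _ h => h.1) hF, hFR⟩⟩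
  refine hF.imp_right fun hF' G hGF hG => ⟨hF' G hGF hG, fun hEG => ?_⟩
  have hFτ := subset_of_mem_dClosure huniq hEd hF (hEG.trans hGF)
    (by have := Finset.card_le_card hGF; omega)
  obtain ⟨S, hES, hSG, hS⟩ := Finset.exists_subsuperset_card_eq hEG hEd (by omega)
  exact hFR S (Or.inr ⟨hS, hES, hSG.trans (hGF.trans hFτ)⟩) (hSG.trans hGF)

theorem collapsible_avoiding_dClosure {L : List (Finset (Fin n))} :
    ∀ {Γ R : Set (Finset (Fin n))}, IsComplex Γ → IsFreeSeq Γ L → (∀ E ∈ L, E.card ≤ d) →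
      collapseList Γ L = ∅ → (∀ S ∈ R, S ∉ Γ) → Collapsible d (avoiding (dClosure d Γ) R) := by
  induction L with
  | nil =>
    rintro Γ R - - - (rfl : Γ = ∅) -
    exact collapsible_of_forall_card_le fun F hF => card_le_of_mem_dClosure_empty hF.1
  | cons E L ih =>
    rintro Γ R hΓ ⟨⟨-, τ, ⟨hτ, hEτ⟩, huniq⟩, hL⟩ hLd hempty hR
    have hEd := hLd E List.mem_cons_self
    have hcollapse := collapsesTo_avoiding_dSetsBetween (C := avoiding (dClosure d Γ) R) hEτ hEd
      (fun F hF hEF hFd => subset_of_mem_dClosure huniq hEd hF.1 hEF hFd)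
      fun F _ hFτ => ⟨hΓ.mem_dClosure_of_subset hτ.1 hFτ,
        fun S hS hSF => hR S hS (hΓ τ hτ.1 S (hSF.trans hFτ))⟩
    rw [avoiding_avoiding, avoiding_dClosure_collapseFace huniq hEd] at hcollapse
    rw [collapsible_iff_collapsesTo_empty]
    refine hcollapse.trans (ih (hΓ.collapseFace E) hL (fun E' hE' => hLd E' (.tail E hE'))
      hempty ?_)
    rintro S (hS | hS) hSΓ
    exacts [hR S hS hSΓ.1, hSΓ.2 hS.2.1]

end ChordalPaper

open ChordalPaper in
theorem stmt8_general (n d : ℕ) (Γ : Set (Finset (Fin n))) (hΓ : IsComplex Γ)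
    (hcol : Collapsible d Γ) :
    Collapsible d (dClosure d Γ) := by
  obtain ⟨L, hL, hLd, hempty⟩ := hcol
  simpa only [avoiding_empty] using
    collapsible_avoiding_dClosure hΓ hL hLd hempty (R := ∅) fun _ h => h.elim

open ChordalPaper in
/-- the `d`-closure of a `d`-collapsible complex is `d`-collapsible. -/
theorem stmt8 (n d : ℕ) (hd : 1 ≤ d) (Γ : Set (Finset (Fin n))) (hΓ : IsComplex Γ)
    (hcol : Collapsible d Γ) :
    Collapsible d (dClosure d Γ) :=
  stmt8_general n d Γ hΓ hcol
end

section
/- If Γ is a d-closure (Γ = Δ_d(Γ)) on [n], then Γ is chordal if and only if Γ is d-chordal. -/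
/-!
A `d`-closure `Γ` satisfies `Δ_t(Γ) = Γ ∪ ⟨[n]⟩^{[t-1]}` for `t ≥ d` and `Δ_t(Γ) = 2^[n]` for
`t < d`; the full simplex has the trivial simplicial order `[∅]` at level `0`. So everything
follows from one step-up: if a complex `Γ` has a simplicial order `E₁, …, E_m` at level `d`, then
`Γ ∪ ⟨[n]⟩^{[d]}` has one at level `d + 1`. To build it, replace each `E = Eᵢ`, whose star lies in
a unique facet `E ∪ T`, by the `(d+1)`-faces `E ∪ {x}` for all but one `x ∈ T`: each of these is
a free non-facet, and deleting them trims the star of `E` to dimension `d`, which is what the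
deletion of `E` leaves of `Γ` once the `d`-skeleton is added back.
-/

namespace ChordalPaper

variable {n : ℕ}

lemma fullSkel_mono : Monotone (fullSkel n) :=
  fun _ _ h _ hF => le_trans hF h

lemma isComplex_srDel {Γ : Set (Finset (Fin n))} (hΓ : IsComplex Γ) (E : Finset (Fin n)) :
    IsComplex (srDel Γ E) := by
  rintro F ⟨hF, hnss⟩ F' hF'
  exact ⟨hΓ F hF F' hF', fun hss => hnss (hss.trans_subset hF')⟩

lemma isComplex_union_fullSkel {Γ : Set (Finset (Fin n))} (hΓ : IsComplex Γ) (d : ℕ) :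
    IsComplex (Γ ∪ fullSkel n d) := by
  rintro F (hF | hF) F' hF'
  · exact Or.inl (hΓ F hF F' hF')
  · exact Or.inr (le_trans (Finset.card_le_card hF') hF)

lemma exists_isFacet_superset_s10 {Γ : Set (Finset (Fin n))} {G : Finset (Fin n)} (hG : G ∈ Γ) :
    ∃ M, IsFacet Γ M ∧ G ⊆ M := by
  obtain ⟨M, hGM, hM, hmax⟩ := Finite.exists_le_maximal (p := (· ∈ Γ)) hG
  exact ⟨M, ⟨hM, fun K hK hMK => (hmax hK hMK).antisymm hMK⟩, hGM⟩

lemma isFreeFace_iff {Γ : Set (Finset (Fin n))} {E : Finset (Fin n)} :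
    IsFreeFace Γ E ↔ E ∈ Γ ∧ ∃ M ∈ Γ, ∀ G ∈ Γ, E ⊆ G → G ⊆ M := by
  constructor
  · rintro ⟨hE, M, ⟨hM, -⟩, huniq⟩
    refine ⟨hE, M, hM.1, fun G hG hEG => ?_⟩
    obtain ⟨P, hP, hGP⟩ := exists_isFacet_superset_s10 hG
    exact huniq P ⟨hP, hEG.trans hGP⟩ ▸ hGP
  · rintro ⟨hE, M, hM, hstar⟩
    have hEM := hstar E hE subset_rfl
    have hMfacet : IsFacet Γ M :=
      ⟨hM, fun G hG hMG => (hstar G hG (hEM.trans hMG)).antisymm hMG⟩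
    exact ⟨hE, M, ⟨hMfacet, hEM⟩, fun P ⟨hP, hEP⟩ => (hP.2 M hM (hstar P hP.1 hEP)).symm⟩

lemma not_isFacet_of_ssubset {Γ : Set (Finset (Fin n))} {E M : Finset (Fin n)} (hM : M ∈ Γ)
    (hEM : E ⊂ M) : ¬ IsFacet Γ E :=
  fun hE => hEM.ne (hE.2 M hM hEM.subset).symm

lemma fullSkel_subset_of_isSimpOrder {d : ℕ} :
    ∀ {Γ : Set (Finset (Fin n))} {L : List (Finset (Fin n))}, IsSimpOrder d Γ L →
      fullSkel n d ⊆ Γ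
  | _, [], h => (h : _ = fullSkel n d).ge
  | _, _ :: _, ⟨_, _, _, h⟩ => fun _ hF => (fullSkel_subset_of_isSimpOrder h hF).1

lemma sep_srDel_eq {Δ : Set (Finset (Fin n))} {E E₁ : Finset (Fin n)} {k : ℕ} (hEE₁ : E ⊆ E₁)
    (hE₁ : E₁.card = k) :
    {G ∈ srDel Δ E₁ | E ⊆ G → G.card ≤ k} = {G ∈ Δ | E ⊆ G → G.card ≤ k} := by
  ext G
  refine ⟨fun ⟨⟨hG, _⟩, hk⟩ => ⟨hG, hk⟩, fun ⟨hG, hk⟩ => ⟨⟨hG, fun hss => ?_⟩, hk⟩⟩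
  have := Finset.card_lt_card hss
  have := hk (hEE₁.trans hss.subset)
  omega

lemma fullSkel_subset_srDel {Δ : Set (Finset (Fin n))} {E : Finset (Fin n)} {k : ℕ}
    (hskel : fullSkel n k ⊆ Δ) (hE : E.card = k) : fullSkel n k ⊆ srDel Δ E :=
  fun _ hG => ⟨hskel hG, fun hss => (hE ▸ Finset.card_lt_card hss).not_ge hG⟩

lemma notMem_of_mem_srDel_insert {Δ : Set (Finset (Fin n))} {E G : Finset (Fin n)} {a : Fin n}
    (hG : G ∈ srDel Δ (insert a E)) (hEG : E ⊆ G) (hGc : (insert a E).card < G.card) :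
    a ∉ G :=
  fun haG => hG.2 <| (Finset.insert_subset haG hEG).ssubset_of_ne fun h => hGc.ne (h ▸ rfl)

lemma exists_simpOrder_of_trimmed_star {d : ℕ} {E T : Finset (Fin n)} (hE : E.card = d)
    (hT : T.Nonempty) :
    ∀ Δ : Set (Finset (Fin n)), IsComplex Δ → fullSkel n (d + 1) ⊆ Δ → Disjoint E T →
      E ∪ T ∈ Δ → (∀ G ∈ Δ, E ⊆ G → d + 1 < G.card → G ⊆ E ∪ T) →
      ∀ L, IsSimpOrder (d + 1) {G ∈ Δ | E ⊆ G → G.card ≤ d + 1} L →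
      ∃ L', IsSimpOrder (d + 1) Δ L' := by
  induction hT using Finset.Nonempty.cons_induction with
  | singleton a =>
    intro Δ _ _ _ _ hstar L hL
    refine ⟨L, ?_⟩
    convert hL using 1
    ext G
    refine ⟨fun hG => ⟨hG, fun hEG => ?_⟩, fun hG => hG.1⟩
    by_contra! hGc
    have := (Finset.card_le_card (hstar G hG hEG hGc)).trans (Finset.card_union_le E {a})
    simp only [Finset.card_singleton] at this
    omega
  | cons a T haT hT ih =>
    intro Δ hΔ hskel hdisj hM hstar L hL
    have haE : a ∉ E := Finset.disjoint_right.mp hdisj (Finset.mem_cons_self a T)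
    set E₁ := insert a E
    have hE₁ : E₁.card = d + 1 := by rw [Finset.card_insert_of_notMem haE, hE]
    have hE₁M : E₁ ⊆ E ∪ T.cons a haT :=
      Finset.insert_subset (by simp) Finset.subset_union_left
    have hstar₁ : ∀ G ∈ Δ, E₁ ⊆ G → G ⊆ E ∪ T.cons a haT := by
      intro G hG hE₁G
      by_cases hGc : G.card ≤ d + 1
      · exact Finset.eq_of_subset_of_card_le hE₁G (hE₁ ▸ hGc) ▸ hE₁M
      · exact hstar G hG ((Finset.subset_insert a E).trans hE₁G) (by omega)
    obtain ⟨b, hb⟩ := hT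
    have hE₁ss : E₁ ⊂ E ∪ T.cons a haT := by
      refine Finset.ssubset_iff_of_subset hE₁M |>.mpr ⟨b, by simp [hb], ?_⟩
      simp only [E₁, Finset.mem_insert, not_or]
      exact ⟨fun hab => haT (hab ▸ hb),
        Finset.disjoint_right.mp hdisj (Finset.mem_cons_of_mem hb)⟩
    have hfree : IsFreeFace Δ E₁ := isFreeFace_iff.mpr ⟨hskel hE₁.le, _, hM, hstar₁⟩
    have haM' : a ∉ E ∪ T := by simp [haE, haT]
    obtain ⟨L', hL'⟩ := ih (srDel Δ E₁) (isComplex_srDel hΔ E₁)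
      (fullSkel_subset_srDel hskel hE₁)
      (hdisj.mono_right (Finset.subset_cons haT))
      ⟨hΔ _ hM _ (Finset.union_subset_union_right (Finset.subset_cons haT)),
        fun hss => haM' (hss.subset (Finset.mem_insert_self a E))⟩
      (fun G hG hEG hGc y hy => by
        have hya : y ≠ a := by
          rintro rfl
          exact notMem_of_mem_srDel_insert hG hEG (hE₁ ▸ hGc) hy
        simpa [hya] using hstar G hG.1 hEG hGc hy)
      L (by rwa [sep_srDel_eq (Finset.subset_insert a E) hE₁])
    exact ⟨E₁ :: L', hE₁, hfree, not_isFacet_of_ssubset hM hE₁ss, hL'⟩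

lemma sep_union_fullSkel_eq {Γ : Set (Finset (Fin n))} {E : Finset (Fin n)} {d : ℕ}
    (hE : E.card = d) :
    {G ∈ Γ ∪ fullSkel n (d + 1) | E ⊆ G → G.card ≤ d + 1} = srDel Γ E ∪ fullSkel n (d + 1) := by
  ext G
  by_cases hGc : G.card ≤ d + 1
  · simp only [Set.mem_union, srDel, fullSkel, Set.mem_ofPred_eq, hGc]
    tauto
  · have hEG : ¬ E ⊆ G ↔ ¬ E ⊂ G := by
      refine ⟨fun h hss => h hss.subset, fun h hEG => h (hEG.ssubset_of_ne ?_)⟩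
      rintro rfl
      omega
    simp only [Set.mem_union, srDel, fullSkel, Set.mem_ofPred_eq, hGc]
    tauto

lemma exists_simpOrder_succ_union_fullSkel {d : ℕ} :
    ∀ {Γ : Set (Finset (Fin n))} {L : List (Finset (Fin n))}, IsComplex Γ →
      IsSimpOrder d Γ L → ∃ L', IsSimpOrder (d + 1) (Γ ∪ fullSkel n (d + 1)) L'
  | Γ, [], _, h => ⟨[], by
      rw [show Γ = fullSkel n d from h]
      exact Set.union_eq_right.mpr (fullSkel_mono d.le_succ)⟩
  | Γ, E :: _, hΓ, ⟨hE, hfree, hnfacet, h⟩ => by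
    obtain ⟨L', hL'⟩ := exists_simpOrder_succ_union_fullSkel (isComplex_srDel hΓ E) h
    obtain ⟨hEΓ, M, hM, hstar⟩ := isFreeFace_iff.mp hfree
    have hEM : E ⊆ M := hstar E hEΓ subset_rfl
    have hEneM : E ≠ M := by
      rintro rfl
      exact hnfacet ⟨hEΓ, fun G hG hEG => (hstar G hG hEG).antisymm hEG⟩
    refine exists_simpOrder_of_trimmed_star hE
      (Finset.sdiff_nonempty.mpr fun h => hEneM (hEM.antisymm h)) _
      (isComplex_union_fullSkel hΓ _) Set.subset_union_right Finset.disjoint_sdiff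
      (by rw [Finset.union_sdiff_of_subset hEM]; exact Or.inl hM) ?_ L'
      (sep_union_fullSkel_eq hE ▸ hL')
    rintro G (hG | hG) hEG hGc
    · rw [Finset.union_sdiff_of_subset hEM]
      exact hstar G hG hEG
    · exact absurd hG hGc.not_ge

lemma exists_simpOrder_union_fullSkel {Γ : Set (Finset (Fin n))} {d t : ℕ}
    {L : List (Finset (Fin n))} (hΓ : IsComplex Γ) (hL : IsSimpOrder d Γ L) (hdt : d ≤ t) :
    ∃ L', IsSimpOrder t (Γ ∪ fullSkel n t) L' := by
  induction t, hdt using Nat.le_induction with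
  | base => exact ⟨L, by rwa [Set.union_eq_left.mpr (fullSkel_subset_of_isSimpOrder hL)]⟩
  | succ t _ ih =>
    obtain ⟨L', hL'⟩ := ih
    rw [← Set.union_eq_right.mpr (fullSkel_mono t.le_succ), ← Set.union_assoc]
    exact exists_simpOrder_succ_union_fullSkel (isComplex_union_fullSkel hΓ t) hL'

lemma isSimpOrder_univ_zero : ∃ L, IsSimpOrder 0 (Set.univ : Set (Finset (Fin n))) L := by
  have hskel : srDel Set.univ ∅ = fullSkel n 0 := by
    ext G
    simp [srDel, fullSkel, Finset.nonempty_iff_ne_empty]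
  rcases (Finset.univ : Finset (Fin n)).eq_empty_or_nonempty with h | h
  · refine ⟨[], (Set.eq_univ_of_forall fun G => ?_).symm⟩
    exact (Finset.card_eq_zero.mpr (Finset.subset_empty.mp (h ▸ G.subset_univ))).le
  · refine ⟨[∅], rfl, ?_, not_isFacet_of_ssubset (Set.mem_univ _) h.empty_ssubset, hskel⟩
    exact isFreeFace_iff.mpr ⟨trivial, _, Set.mem_univ _, fun G _ _ => G.subset_univ⟩

lemma exists_simpOrder_univ (t : ℕ) :
    ∃ L, IsSimpOrder t (Set.univ : Set (Finset (Fin n))) L := by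
  obtain ⟨L, hL⟩ := isSimpOrder_univ_zero (n := n)
  simpa only [Set.univ_union] using
    exists_simpOrder_union_fullSkel (Γ := Set.univ) (fun _ _ _ _ => trivial) hL t.zero_le

lemma dClosure_eq_univ_of_lt {Γ : Set (Finset (Fin n))} {d t : ℕ} (hclo : Γ = dClosure d Γ)
    (htd : t < d) : dClosure t Γ = Set.univ :=
  Set.eq_univ_of_forall fun _ => Or.inr fun G _ hG => hclo ▸ Or.inl (by omega)

lemma dClosure_eq_union_fullSkel_of_le {Γ : Set (Finset (Fin n))} {d t : ℕ} (hΓ : IsComplex Γ)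
    (hclo : Γ = dClosure d Γ) (hdt : d ≤ t) : dClosure t Γ = Γ ∪ fullSkel n t := by
  ext F
  refine ⟨fun hF => ?_, ?_⟩
  · by_cases hFc : F.card ≤ t
    · exact Or.inr hFc
    refine Or.inl (hclo ▸ Or.inr fun G hGF hG => ?_)
    obtain ⟨H, hGH, hHF, hH⟩ :=
      Finset.exists_subsuperset_card_eq (n := t + 1) hGF (by omega) (by omega)
    exact hΓ H ((hF.resolve_left hFc) H hHF hH) G hGH
  · rintro (hF | hF)
    · exact Or.inr fun G hGF _ => hΓ F hF G hGF
    · exact Or.inl hF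

end ChordalPaper

open ChordalPaper in
/-- a `d`-closure is chordal iff it is `d`-chordal. -/
theorem stmt10 (n d : ℕ) (hd : 1 ≤ d) (Γ : Set (Finset (Fin n))) (hΓ : IsComplex Γ)
    (hclo : Γ = dClosure d Γ) :
    (∀ t, 1 ≤ t → DChordal t Γ) ↔ DChordal d Γ := by
  refine ⟨fun h => h d hd, fun ⟨L, hL⟩ t _ => ?_⟩
  rw [← hclo] at hL
  rcases lt_or_ge t d with htd | hdt
  · rw [DChordal, dClosure_eq_univ_of_lt hclo htd]
    exact exists_simpOrder_univ t
  · rw [DChordal, dClosure_eq_union_fullSkel_of_le hΓ hclo hdt]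
    exact exists_simpOrder_union_fullSkel hΓ hL hdt
end
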